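/- arXiv:1804.04581 — 4 statements merged into one kernel-verified Lean document; each statement's English description precedes it below -/
import Mathlib

section
/- Let a, b : S^1 → ℝ be smooth positive 2π-periodic functions satisfying a''/a + b''/b + a'b'/(ab) ≤ 1/(2j) pointwise. Then the functions α = ln a and β = ln b satisfy ∫_{-π}^{π} (α')^2 dz ≤ 2π/j and ∫_{-π}^{π} (β')^2 dz ≤ 2π/j. -/
open Real intervalIntegral

private lemma periodic_deriv_aux {f : ℝ → ℝ} {c : ℝ} (hf : Function.Periodic f c) :
    Function.Periodic (deriv f) c := by
  intro x
  have : (fun t => f (t + c)) = f := funext fun t => hf t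
  calc deriv f (x + c) = deriv (fun t => f (t + c)) x := (deriv_comp_add_const f c x).symm
    _ = deriv f x := by rw [this]

private lemma u_hasDerivAt {a : ℝ → ℝ} (ha : ContDiff ℝ (⊤ : ℕ∞) a) (hpos : ∀ z, 0 < a z) (z : ℝ) :
    HasDerivAt (fun t => deriv a t / a t)
      (deriv (deriv a) z / a z - (deriv a z / a z) ^ 2) z := by
  have ha0 : ContDiff ℝ ((⊤ : ℕ∞) : WithTop ℕ∞) a := ha.of_le (by simp)
  have ha' : ContDiff ℝ ((⊤ : ℕ∞) : WithTop ℕ∞) (deriv a) := (contDiff_infty_iff_deriv.mp ha0).2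
  have h1 : HasDerivAt (deriv a) (deriv (deriv a) z) z :=
    ((contDiff_infty_iff_deriv.mp ha').1 z).hasDerivAt
  have h2 : HasDerivAt a (deriv a z) z := ((contDiff_infty_iff_deriv.mp ha0).1 z).hasDerivAt
  have h := h1.div h2 (hpos z).ne'
  refine h.congr_deriv ?_
  have : a z ≠ 0 := (hpos z).ne'
  field_simp

private lemma main_bound (j : ℝ) (hj : 0 < j)
    (a b : ℝ → ℝ) (ha : ContDiff ℝ (⊤ : ℕ∞) a) (hb : ContDiff ℝ (⊤ : ℕ∞) b)
    (hapos : ∀ z, 0 < a z) (hbpos : ∀ z, 0 < b z)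
    (haper : Function.Periodic a (2 * π)) (hbper : Function.Periodic b (2 * π))
    (hR : ∀ z, deriv (deriv a) z / a z + deriv (deriv b) z / b z
      + deriv a z * deriv b z / (a z * b z) ≤ 1 / (2 * j)) :
    (∫ z in (-π)..π, (deriv a z / a z) ^ 2) ≤ 2 * π / j := by
  set u : ℝ → ℝ := fun z => deriv a z / a z with hu_def
  set v : ℝ → ℝ := fun z => deriv b z / b z with hv_def
  have ha0 : ContDiff ℝ ((⊤ : ℕ∞) : WithTop ℕ∞) a := ha.of_le (by simp)
  have hb0 : ContDiff ℝ ((⊤ : ℕ∞) : WithTop ℕ∞) b := hb.of_le (by simp)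
  have ha' : ContDiff ℝ ((⊤ : ℕ∞) : WithTop ℕ∞) (deriv a) := (contDiff_infty_iff_deriv.mp ha0).2
  have hb' : ContDiff ℝ ((⊤ : ℕ∞) : WithTop ℕ∞) (deriv b) := (contDiff_infty_iff_deriv.mp hb0).2
  have ha'' : ContDiff ℝ ((⊤ : ℕ∞) : WithTop ℕ∞) (deriv (deriv a)) := (contDiff_infty_iff_deriv.mp ha').2
  have hb'' : ContDiff ℝ ((⊤ : ℕ∞) : WithTop ℕ∞) (deriv (deriv b)) := (contDiff_infty_iff_deriv.mp hb').2
  have hanz : ∀ z, a z ≠ 0 := fun z => (hapos z).ne'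
  have hbnz : ∀ z, b z ≠ 0 := fun z => (hbpos z).ne'
  have hu_cont : Continuous u := ha'.continuous.div ha.continuous hanz
  have hv_cont : Continuous v := hb'.continuous.div hb.continuous hbnz
  set ga : ℝ → ℝ := fun z => deriv (deriv a) z / a z - u z ^ 2 with hga_def
  set gb : ℝ → ℝ := fun z => deriv (deriv b) z / b z - v z ^ 2 with hgb_def
  have hga_cont : Continuous ga :=
    (ha''.continuous.div ha.continuous hanz).sub (hu_cont.pow 2)
  have hgb_cont : Continuous gb :=
    (hb''.continuous.div hb.continuous hbnz).sub (hv_cont.pow 2)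
  -- periodicity of u, v
  have huper : Function.Periodic u (2 * π) := fun z => by
    simp only [hu_def, periodic_deriv_aux haper z, haper z]
  have hvper : Function.Periodic v (2 * π) := fun z => by
    simp only [hv_def, periodic_deriv_aux hbper z, hbper z]
  -- ∫ ga = u π - u (-π) = 0
  have hIga : (∫ z in (-π)..π, ga z) = 0 := by
    have := intervalIntegral.integral_eq_sub_of_hasDerivAt
      (f := u) (f' := ga) (a := -π) (b := π)
      (fun x _ => u_hasDerivAt ha hapos x) (hga_cont.intervalIntegrable _ _)
    rw [this]
    have : u π = u (-π) := by
      have h := huper (-π); rw [show -π + 2 * π = π by ring] at h; exact h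
    rw [this, sub_self]
  have hIgb : (∫ z in (-π)..π, gb z) = 0 := by
    have := intervalIntegral.integral_eq_sub_of_hasDerivAt
      (f := v) (f' := gb) (a := -π) (b := π)
      (fun x _ => u_hasDerivAt hb hbpos x) (hgb_cont.intervalIntegrable _ _)
    rw [this]
    have : v π = v (-π) := by
      have h := hvper (-π); rw [show -π + 2 * π = π by ring] at h; exact h
    rw [this, sub_self]
  have hle : (-π : ℝ) ≤ π := by linarith [pi_pos]
  -- key pointwise inequality
  have hpt : ∀ z, u z ^ 2 + v z ^ 2 + u z * v z ≤ 1 / (2 * j) - ga z - gb z := by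
    intro z
    have h := hR z
    have h2 : deriv a z * deriv b z / (a z * b z) = u z * v z := by
      simp only [hu_def, hv_def]; field_simp
    have h3 : deriv (deriv a) z / a z = ga z + u z ^ 2 := by simp [hga_def]
    have h4 : deriv (deriv b) z / b z = gb z + v z ^ 2 := by simp [hgb_def]
    rw [h2, h3, h4] at h
    linarith
  have hfcont : Continuous (fun z => u z ^ 2 + v z ^ 2 + u z * v z) :=
    ((hu_cont.pow 2).add (hv_cont.pow 2)).add (hu_cont.mul hv_cont)
  have hgcont : Continuous (fun z => 1 / (2 * j) - ga z - gb z) :=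
    (continuous_const.sub hga_cont).sub hgb_cont
  have hkey : (∫ z in (-π)..π, (u z ^ 2 + v z ^ 2 + u z * v z)) ≤ π / j := by
    have hmono := intervalIntegral.integral_mono_on (μ := MeasureTheory.volume) hle
      (hfcont.intervalIntegrable _ _) (hgcont.intervalIntegrable _ _) (fun x _ => hpt x)
    have hsplit : (∫ z in (-π)..π, (1 / (2 * j) - ga z - gb z))
        = (∫ z in (-π)..π, (1 / (2 * j) : ℝ)) - (∫ z in (-π)..π, ga z)
          - (∫ z in (-π)..π, gb z) := by
      rw [intervalIntegral.integral_sub (f := fun z => 1 / (2 * j) - ga z) ((continuous_const.sub hga_cont).intervalIntegrable _ _)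
        (hgb_cont.intervalIntegrable _ _),
        intervalIntegral.integral_sub ((continuous_const (y := 1/(2*j))).intervalIntegrable _ _)
        (hga_cont.intervalIntegrable _ _)]
    rw [hsplit, hIga, hIgb] at hmono
    simp only [intervalIntegral.integral_const, smul_eq_mul, sub_zero] at hmono
    calc (∫ z in (-π)..π, (u z ^ 2 + v z ^ 2 + u z * v z)) ≤ (π - -π) * (1 / (2 * j)) := hmono
      _ = π / j := by field_simp; ring
  -- u² ≤ 2(u² + v² + uv)
  have hpt2 : ∀ z, u z ^ 2 ≤ 2 * (u z ^ 2 + v z ^ 2 + u z * v z) := by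
    intro z; nlinarith [sq_nonneg (u z + v z), sq_nonneg (v z)]
  have h2 : (∫ z in (-π)..π, u z ^ 2)
      ≤ ∫ z in (-π)..π, 2 * (u z ^ 2 + v z ^ 2 + u z * v z) :=
    intervalIntegral.integral_mono_on (μ := MeasureTheory.volume) hle ((hu_cont.pow 2).intervalIntegrable _ _)
      ((continuous_const.mul hfcont).intervalIntegrable _ _) (fun x _ => hpt2 x)
  rw [intervalIntegral.integral_const_mul] at h2
  calc (∫ z in (-π)..π, u z ^ 2) ≤ 2 * ∫ z in (-π)..π, (u z ^ 2 + v z ^ 2 + u z * v z) := h2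
    _ ≤ 2 * (π / j) := by linarith
    _ = 2 * π / j := by ring

/-- Let `a, b` be smooth positive 2π-periodic functions satisfying the scalar curvature
bound `a''/a + b''/b + a'b'/(ab) ≤ 1/(2j)` pointwise. Then `α = ln a` and `β = ln b`
satisfy `∫_{-π}^{π} (α')² dz ≤ 2π/j` and `∫_{-π}^{π} (β')² dz ≤ 2π/j`. -/
theorem log_gradient_L2_bound
    (j : ℝ) (hj : 0 < j)
    (a b : ℝ → ℝ) (ha : ContDiff ℝ (⊤ : ℕ∞) a) (hb : ContDiff ℝ (⊤ : ℕ∞) b)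
    (hapos : ∀ z, 0 < a z) (hbpos : ∀ z, 0 < b z)
    (haper : Function.Periodic a (2 * π)) (hbper : Function.Periodic b (2 * π))
    (hR : ∀ z, deriv (deriv a) z / a z + deriv (deriv b) z / b z
      + deriv a z * deriv b z / (a z * b z) ≤ 1 / (2 * j)) :
    (∫ z in (-π)..π, (deriv (fun t => Real.log (a t)) z) ^ 2) ≤ 2 * π / j ∧
    (∫ z in (-π)..π, (deriv (fun t => Real.log (b t)) z) ^ 2) ≤ 2 * π / j := by
  have hlog : ∀ (f : ℝ → ℝ), ContDiff ℝ (⊤ : ℕ∞) f → (∀ z, 0 < f z) →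
      ∀ z, deriv (fun t => Real.log (f t)) z = deriv f z / f z := by
    intro f hf hfpos z
    have h1 : HasDerivAt f (deriv f z) z :=
      ((contDiff_infty_iff_deriv.mp (hf.of_le (by simp))).1 z).hasDerivAt
    have h2 := (Real.hasDerivAt_log (hfpos z).ne').comp z h1
    rw [div_eq_inv_mul]; exact h2.deriv
  have hRb : ∀ z, deriv (deriv b) z / b z + deriv (deriv a) z / a z
      + deriv b z * deriv a z / (b z * a z) ≤ 1 / (2 * j) := by
    intro z
    have := hR z
    have e : deriv b z * deriv a z / (b z * a z)
        = deriv a z * deriv b z / (a z * b z) := by ring_nf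
    linarith [e ▸ this]
  constructor
  · have := main_bound j hj a b ha hb hapos hbpos haper hbper hR
    calc (∫ z in (-π)..π, (deriv (fun t => Real.log (a t)) z) ^ 2)
        = ∫ z in (-π)..π, (deriv a z / a z) ^ 2 := by
          apply intervalIntegral.integral_congr
          intro z _; simp only [hlog a ha hapos]
      _ ≤ 2 * π / j := this
  · have := main_bound j hj b a hb ha hbpos hapos hbper haper hRb
    calc (∫ z in (-π)..π, (deriv (fun t => Real.log (b t)) z) ^ 2)
        = ∫ z in (-π)..π, (deriv b z / b z) ^ 2 := by
          apply intervalIntegral.integral_congr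
          intro z _; simp only [hlog b hb hbpos]
      _ ≤ 2 * π / j := this
end

section
/- Let a, b : S^1 → ℝ be smooth positive 2π-periodic functions with a(z)b(z) ≥ A_0/(4π^2) for all z, min a ≤ D_0, min b ≤ D_0, and ∫_{-π}^{π} ((ln a)')^2 dz ≤ 2π/j, ∫_{-π}^{π} ((ln b)')^2 dz ≤ 2π/j. Then for all z: (A_0/(4π^2 D_0)) e^{-2π/√j} ≤ a(z) ≤ D_0 e^{2π/√j}, and the same bounds hold for b(z). -/
open Real intervalIntegral

/-- Cauchy–Schwarz for interval integrals. -/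
lemma cs_interval {g : ℝ → ℝ} (hg : Continuous g) {u v : ℝ} (huv : u ≤ v) :
    (∫ x in u..v, g x) ^ 2 ≤ (v - u) * ∫ x in u..v, g x ^ 2 := by
  rcases eq_or_lt_of_le huv with h | h
  · simp [← h]
  set L := v - u with hL
  have hL0 : 0 < L := by simp only [hL]; linarith
  set I := ∫ x in u..v, g x with hI
  have hint : IntervalIntegrable g MeasureTheory.volume u v := hg.intervalIntegrable u v
  have hint2 : IntervalIntegrable (fun x => g x ^ 2) MeasureTheory.volume u v :=
    (hg.pow 2).intervalIntegrable u v
  have key : (0:ℝ) ≤ ∫ x in u..v, (L * g x - I) ^ 2 :=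
    intervalIntegral.integral_nonneg huv (fun x _ => sq_nonneg _)
  have expand : (∫ x in u..v, (L * g x - I) ^ 2)
      = L ^ 2 * (∫ x in u..v, g x ^ 2) - (2 * L * I) * I + I ^ 2 * L := by
    have h1 : ∀ x, (L * g x - I) ^ 2 = L ^ 2 * g x ^ 2 - (2 * L * I) * g x + I ^ 2 := by
      intro x; ring
    simp_rw [h1]
    rw [intervalIntegral.integral_add (((hint2.const_mul _).sub (hint.const_mul _)))
        (intervalIntegrable_const),
      intervalIntegral.integral_sub (hint2.const_mul _) (hint.const_mul _),
      intervalIntegral.integral_const_mul, intervalIntegral.integral_const_mul,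
      intervalIntegral.integral_const, ← hI]
    simp only [smul_eq_mul]
    ring
  nlinarith [key, expand, sq_nonneg I]

lemma upper_bound_aux {j D₀ : ℝ} (hj : 0 < j) (hD₀ : 0 < D₀)
    (a : ℝ → ℝ) (ha : ContDiff ℝ (⊤ : ℕ∞) a) (hapos : ∀ z, 0 < a z)
    (haper : Function.Periodic a (2 * π))
    (hmina : sInf (a '' Set.Icc (-π) π) ≤ D₀)
    (hgrada : (∫ z in (-π)..π, (deriv (fun t => Real.log (a t)) z) ^ 2) ≤ 2 * π / j) :
    ∀ z, a z ≤ D₀ * Real.exp (2 * π / Real.sqrt j) := by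
  intro z
  have hπ : (0:ℝ) < π := pi_pos
  set f : ℝ → ℝ := fun t => Real.log (a t) with hf
  have hfd : Differentiable ℝ f :=
    fun t => ((ha.differentiable (by simp)) t).log (hapos t).ne'
  have hfc : ContDiff ℝ (⊤ : ℕ∞) f := ha.log (fun t => (hapos t).ne')
  have hgc : Continuous (deriv f) := hfc.continuous_deriv (by simp)
  set g := deriv f with hg
  -- minimum point
  obtain ⟨z₀, hz₀mem, hz₀min⟩ := isCompact_Icc.exists_isMinOn
    (Set.nonempty_Icc.2 (by linarith)) (ha.continuous.continuousOn (s := Set.Icc (-π) π))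
  have haz₀D : a z₀ ≤ D₀ := by
    refine le_trans (le_csInf ⟨a z₀, Set.mem_image_of_mem a hz₀mem⟩ ?_) hmina
    rintro y ⟨x, hx, rfl⟩
    exact hz₀min hx
  -- periodic representative
  obtain ⟨z', hz'mem, hz'eq⟩ := haper.exists_mem_Ico (by positivity) z (-π)
  have hz'Icc : z' ∈ Set.Icc (-π) π := by
    constructor
    · exact hz'mem.1
    · have := hz'mem.2; linarith
  -- FTC
  have hftc : (∫ x in z₀..z', g x) = f z' - f z₀ :=
    intervalIntegral.integral_deriv_eq_sub (fun x _ => hfd x) (hgc.intervalIntegrable _ _)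
  -- Cauchy–Schwarz bound
  have hsqrtj : (0:ℝ) < Real.sqrt j := Real.sqrt_pos.2 hj
  have hboundint : ∀ u v : ℝ, u ∈ Set.Icc (-π) π → v ∈ Set.Icc (-π) π → u ≤ v →
      (∫ x in u..v, g x) ^ 2 ≤ (2 * π / Real.sqrt j) ^ 2 := by
    intro u v hu hv huv
    have h1 : (∫ x in u..v, g x) ^ 2 ≤ (v - u) * ∫ x in u..v, g x ^ 2 := cs_interval hgc huv
    have h2 : (∫ x in u..v, g x ^ 2) ≤ ∫ x in (-π)..π, g x ^ 2 :=
      intervalIntegral.integral_mono_interval hu.1 huv hv.2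
        (MeasureTheory.ae_of_all _ (fun x => sq_nonneg _))
        ((hgc.pow 2).intervalIntegrable _ _)
    have h3 : (∫ x in (-π)..π, g x ^ 2) ≤ 2 * π / j := hgrada
    have h4 : (0:ℝ) ≤ ∫ x in u..v, g x ^ 2 :=
      intervalIntegral.integral_nonneg huv (fun x _ => sq_nonneg _)
    have h5 : v - u ≤ 2 * π := by have := hu.1; have := hv.2; linarith
    have h6 : (∫ x in u..v, g x) ^ 2 ≤ 2 * π * (2 * π / j) := by
      calc (∫ x in u..v, g x) ^ 2 ≤ (v - u) * ∫ x in u..v, g x ^ 2 := h1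
        _ ≤ (2 * π) * ∫ x in u..v, g x ^ 2 := by nlinarith
        _ ≤ 2 * π * (2 * π / j) := by nlinarith [le_trans h2 h3]
    have h7 : (2 * π / Real.sqrt j) ^ 2 = 2 * π * (2 * π / j) := by
      rw [div_pow, Real.sq_sqrt hj.le]; ring
    linarith [h6, h7.ge]
  have habs : |∫ x in z₀..z', g x| ≤ 2 * π / Real.sqrt j := by
    have hsq : (∫ x in z₀..z', g x) ^ 2 ≤ (2 * π / Real.sqrt j) ^ 2 := by
      rcases le_total z₀ z' with hle | hle
      · exact hboundint z₀ z' hz₀mem hz'Icc hle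
      · rw [intervalIntegral.integral_symm, neg_pow]
        · simpa using hboundint z' z₀ hz'Icc hz₀mem hle
    have := Real.sqrt_le_sqrt hsq
    rwa [Real.sqrt_sq_eq_abs, Real.sqrt_sq (by positivity)] at this
  -- conclude
  have hflog : f z' - f z₀ ≤ 2 * π / Real.sqrt j := by
    rw [← hftc]; exact (le_abs_self _).trans habs
  have haz : a z = a z' := hz'eq
  have h1 : a z' = Real.exp (f z') := (Real.exp_log (hapos z')).symm
  have h2 : a z₀ = Real.exp (f z₀) := (Real.exp_log (hapos z₀)).symm
  calc a z = Real.exp (f z') := by rw [haz, h1]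
    _ ≤ Real.exp (f z₀ + 2 * π / Real.sqrt j) := Real.exp_le_exp.2 (by linarith)
    _ = a z₀ * Real.exp (2 * π / Real.sqrt j) := by rw [Real.exp_add, ← h2]
    _ ≤ D₀ * Real.exp (2 * π / Real.sqrt j) := by
        exact mul_le_mul_of_nonneg_right haz₀D (Real.exp_pos _).le

/-- Uniform upper and lower bounds for the warping functions of a doubly warped
product 3-torus: if `a(z)b(z) ≥ A₀/(4π²)` for all `z`, `min a ≤ D₀`, `min b ≤ D₀`, and
`∫_{-π}^{π} ((ln a)')² ≤ 2π/j`, `∫_{-π}^{π} ((ln b)')² ≤ 2π/j`, then for all `z`,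
`(A₀/(4π²D₀)) e^{-2π/√j} ≤ a(z) ≤ D₀ e^{2π/√j}` and likewise for `b`. -/
theorem uniform_bounds_doubly_warped
    (j A₀ D₀ : ℝ) (hj : 0 < j) (hA₀ : 0 < A₀) (hD₀ : 0 < D₀)
    (a b : ℝ → ℝ) (ha : ContDiff ℝ (⊤ : ℕ∞) a) (hb : ContDiff ℝ (⊤ : ℕ∞) b)
    (hapos : ∀ z, 0 < a z) (hbpos : ∀ z, 0 < b z)
    (haper : Function.Periodic a (2 * π)) (hbper : Function.Periodic b (2 * π))
    (hprod : ∀ z, A₀ / (4 * π ^ 2) ≤ a z * b z)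
    (hmina : sInf (a '' Set.Icc (-π) π) ≤ D₀)
    (hminb : sInf (b '' Set.Icc (-π) π) ≤ D₀)
    (hgrada : (∫ z in (-π)..π, (deriv (fun t => Real.log (a t)) z) ^ 2) ≤ 2 * π / j)
    (hgradb : (∫ z in (-π)..π, (deriv (fun t => Real.log (b t)) z) ^ 2) ≤ 2 * π / j) :
    ∀ z : ℝ,
      (A₀ / (4 * π ^ 2 * D₀) * Real.exp (-(2 * π) / Real.sqrt j) ≤ a z ∧
        a z ≤ D₀ * Real.exp (2 * π / Real.sqrt j)) ∧
      (A₀ / (4 * π ^ 2 * D₀) * Real.exp (-(2 * π) / Real.sqrt j) ≤ b z ∧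
        b z ≤ D₀ * Real.exp (2 * π / Real.sqrt j)) := by
  have hπ : (0:ℝ) < π := pi_pos
  have hupa := upper_bound_aux hj hD₀ a ha hapos haper hmina hgrada
  have hupb := upper_bound_aux hj hD₀ b hb hbpos hbper hminb hgradb
  have hE : (0:ℝ) < Real.exp (2 * π / Real.sqrt j) := Real.exp_pos _
  have hlow : ∀ u v : ℝ, 0 < u → 0 < v → A₀ / (4 * π ^ 2) ≤ u * v →
      v ≤ D₀ * Real.exp (2 * π / Real.sqrt j) →
      A₀ / (4 * π ^ 2 * D₀) * Real.exp (-(2 * π) / Real.sqrt j) ≤ u := by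
    intro u v hu hv hprod huv
    have key : A₀ / (4 * π ^ 2) ≤ u * (D₀ * Real.exp (2 * π / Real.sqrt j)) :=
      hprod.trans (mul_le_mul_of_nonneg_left huv hu.le)
    rw [div_le_iff₀ (by positivity)] at key
    rw [neg_div, Real.exp_neg, ← div_eq_mul_inv, div_div,
      div_le_iff₀ (by positivity)]
    nlinarith [key]
  intro z
  exact ⟨⟨hlow (a z) (b z) (hapos z) (hbpos z) (hprod z) (hupb z), hupa z⟩,
    ⟨hlow (b z) (a z) (hbpos z) (hapos z) (by have := hprod z; nlinarith) (hupa z), hupb z⟩⟩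
end

section
/- (Stampacchia's Lemma) Let φ : [x̄, ∞) → [0, ∞) be non-increasing and suppose there exist C > 0, η > 0, γ > 1 such that (y - x)^η φ(y) ≤ C φ(x)^γ for all y ≥ x ≥ x̄. Then φ(z) = 0 for all z ≥ x̄ + d, where d^η = C φ(x̄)^{γ-1} 2^{ηγ/(γ-1)}. -/
/-!
Put `μ = η / (γ - 1)` and `x_k = x̄ + d (1 - 2^{-k})`, so that `x_{k+1} - x_k = d 2^{-(k+1)}`.
By induction, `φ(x_k) ≤ φ(x̄) 2^{-μk}`: the hypothesis at `x_k ≤ x_{k+1}` bounds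
`(d 2^{-(k+1)})^η φ(x_{k+1})` by `C (φ(x̄) 2^{-μk})^γ`, and the choice of `d` makes this
exactly `(d 2^{-(k+1)})^η φ(x̄) 2^{-μ(k+1)}`. Since every `x_k ≤ x̄ + d` and `φ` is
non-increasing, `0 ≤ φ(z) ≤ φ(x̄) 2^{-μk} → 0` for `z ≥ x̄ + d`.
-/

open Real Filter Topology

lemma nonpos_of_forall_le_mul_two_rpow_neg {x a μ : ℝ} (hμ : 0 < μ)
    (h : ∀ k : ℕ, x ≤ a * 2 ^ (-(μ * k))) : x ≤ 0 := by
  have hbase : (2 : ℝ) ^ (-μ) < 1 := rpow_lt_one_of_one_lt_of_neg one_lt_two (neg_neg_of_pos hμ)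
  have hlim : Tendsto (fun k : ℕ => a * 2 ^ (-(μ * k))) atTop (𝓝 (a * 0)) := by
    refine ((tendsto_rpow_atTop_of_base_lt_one _ (by linarith [rpow_pos_of_pos two_pos (-μ)])
      hbase).comp tendsto_natCast_atTop_atTop).const_mul a |>.congr fun k => ?_
    simp only [Function.comp_apply, ← rpow_mul zero_le_two, neg_mul]
  exact le_of_tendsto_of_tendsto' tendsto_const_nhds (by simpa using hlim) h

lemma two_rpow_neg_sub_two_rpow_neg_add_one (t : ℝ) :
    (2 : ℝ) ^ (-t) - 2 ^ (-(t + 1)) = 2 ^ (-(t + 1)) := by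
  rw [neg_add, rpow_add two_pos, rpow_neg_one]
  ring

lemma add_mul_one_sub_two_rpow_neg_mem_Icc {x d t : ℝ} (hd : 0 ≤ d) (ht : 0 ≤ t) :
    x + d * (1 - 2 ^ (-t)) ∈ Set.Icc x (x + d) := by
  have h2t : (2 : ℝ) ^ (-t) ≤ 1 := rpow_le_one_of_one_le_of_nonpos one_le_two (neg_nonpos.2 ht)
  have : (0 : ℝ) ≤ 2 ^ (-t) := by positivity
  constructor <;> nlinarith

lemma stampacchia_exponent_identity {C η γ a d : ℝ} (hγ : 1 < γ) (ha : 0 ≤ a) (hd : 0 ≤ d)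
    (hdη : d ^ η = C * a ^ (γ - 1) * 2 ^ (η * γ / (γ - 1))) (t : ℝ) :
    C * (a * 2 ^ (-(η / (γ - 1) * t))) ^ γ
      = (d * 2 ^ (-(t + 1))) ^ η * (a * 2 ^ (-(η / (γ - 1) * (t + 1)))) := by
  have hγ1 : γ - 1 ≠ 0 := (sub_pos.2 hγ).ne'
  have haγ : a ^ γ = a ^ (γ - 1) * a := by
    rw [← rpow_add_one' ha (by linarith), sub_add_cancel]
  have h2 : ((2 : ℝ) ^ (-(η / (γ - 1) * t))) ^ γ
      = 2 ^ (η * γ / (γ - 1)) * (2 ^ (-(t + 1))) ^ η * 2 ^ (-(η / (γ - 1) * (t + 1))) := by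
    rw [← rpow_mul zero_le_two, ← rpow_mul zero_le_two, ← rpow_add two_pos, ← rpow_add two_pos]
    congr 1
    field_simp
    ring
  rw [mul_rpow ha (by positivity), mul_rpow hd (by positivity), hdη, haγ, h2]
  ring

lemma stampacchia_iterate {φ : ℝ → ℝ} {xbar C η γ d : ℝ} (hC : 0 ≤ C) (hγ : 1 < γ) (hd : 0 < d)
    (hnonneg : ∀ x, xbar ≤ x → 0 ≤ φ x)
    (hineq : ∀ x y, xbar ≤ x → x ≤ y → (y - x) ^ η * φ y ≤ C * φ x ^ γ)
    (hdη : d ^ η = C * φ xbar ^ (γ - 1) * 2 ^ (η * γ / (γ - 1))) (k : ℕ) :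
    φ (xbar + d * (1 - 2 ^ (-(k : ℝ)))) ≤ φ xbar * 2 ^ (-(η / (γ - 1) * k)) := by
  induction k with
  | zero => simp
  | succ k ih =>
    set x := xbar + d * (1 - 2 ^ (-(k : ℝ)))
    set y := xbar + d * (1 - 2 ^ (-((k : ℝ) + 1)))
    have hx : xbar ≤ x := (add_mul_one_sub_two_rpow_neg_mem_Icc hd.le k.cast_nonneg).1
    have hgap : y - x = d * 2 ^ (-((k : ℝ) + 1)) := by
      rw [← two_rpow_neg_sub_two_rpow_neg_add_one]
      ring
    have hxy : x ≤ y := sub_nonneg.1 (hgap ▸ by positivity)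
    have hstep : (d * 2 ^ (-((k : ℝ) + 1))) ^ η * φ y
        ≤ (d * 2 ^ (-((k : ℝ) + 1))) ^ η * (φ xbar * 2 ^ (-(η / (γ - 1) * ((k : ℝ) + 1)))) :=
      calc (d * 2 ^ (-((k : ℝ) + 1))) ^ η * φ y
          ≤ C * φ x ^ γ := hgap ▸ hineq x y hx hxy
        _ ≤ C * (φ xbar * 2 ^ (-(η / (γ - 1) * k))) ^ γ := by
          gcongr
          exact hnonneg x hx
        _ = _ := stampacchia_exponent_identity hγ (hnonneg xbar le_rfl) hd.le hdη k
    push_cast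
    exact le_of_mul_le_mul_left hstep (by positivity)

/-- **Stampacchia's Lemma.** Let `φ : [x̄, ∞) → [0, ∞)` be non-increasing and suppose
there exist `C > 0`, `η > 0`, `γ > 1` such that `(y - x)^η φ(y) ≤ C φ(x)^γ` for all
`y ≥ x ≥ x̄`. Then `φ(z) = 0` for all `z ≥ x̄ + d`, where
`d^η = C φ(x̄)^{γ-1} 2^{ηγ/(γ-1)}`. -/
theorem stampacchia_lemma
    (φ : ℝ → ℝ) (xbar C η γ : ℝ) (hC : 0 < C) (hη : 0 < η) (hγ : 1 < γ)
    (hnonneg : ∀ x, xbar ≤ x → 0 ≤ φ x)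
    (hmono : ∀ x y, xbar ≤ x → x ≤ y → φ y ≤ φ x)
    (hineq : ∀ x y, xbar ≤ x → x ≤ y → (y - x) ^ η * φ y ≤ C * φ x ^ γ) :
    ∀ z, xbar + (C * φ xbar ^ (γ - 1) * 2 ^ (η * γ / (γ - 1))) ^ η⁻¹ ≤ z → φ z = 0 := by
  intro z hz
  set D := C * φ xbar ^ (γ - 1) * 2 ^ (η * γ / (γ - 1))
  set d := D ^ η⁻¹
  have ha : 0 ≤ φ xbar := hnonneg xbar le_rfl
  have hz' : xbar ≤ z := le_trans (le_add_of_nonneg_right (by positivity)) hz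
  refine le_antisymm ?_ (hnonneg z hz')
  rcases ha.eq_or_lt with ha | ha
  · exact ha ▸ hmono xbar z le_rfl hz'
  have hD : 0 < D := by positivity
  have hd : 0 < d := rpow_pos_of_pos hD _
  have hdη : d ^ η = D := rpow_inv_rpow hD.le hη.ne'
  refine nonpos_of_forall_le_mul_two_rpow_neg (a := φ xbar) (div_pos hη (sub_pos.2 hγ)) fun k => ?_
  obtain ⟨hxk, hxkd⟩ := add_mul_one_sub_two_rpow_neg_mem_Icc (x := xbar) hd.le k.cast_nonneg
  exact (hmono _ z hxk (hxkd.trans hz)).trans (stampacchia_iterate hC.le hγ hd hnonneg hineq hdη k)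
end

section
/- Let h : T^2 → ℝ be smooth with Δh + |∇h|^2 ≤ 1/(2j) pointwise on T^2 = [-π,π]^2 (periodic). For γ = √(C/(2j)) with C chosen so that (1/(2j)) ≤ γ^2 (e^{2γθ} + e^{γθ}) for θ ∈ [η_1, η_2], and Ω = [η_1, η_2] × S^1, one has min_Ω h ≥ min_{∂Ω} h - (e^{γ η_2} - e^{γ η_1}). -/
open Real

/-- Partial derivative in `x` of a function of two variables. -/
noncomputable def pdx (h : ℝ → ℝ → ℝ) (x y : ℝ) : ℝ := deriv (fun s => h s y) x

/-- Partial derivative in `y` of a function of two variables. -/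
noncomputable def pdy (h : ℝ → ℝ → ℝ) (x y : ℝ) : ℝ := deriv (fun s => h x s) y

/-- The Euclidean Laplacian of a function of two variables. -/
noncomputable def lap2 (h : ℝ → ℝ → ℝ) (x y : ℝ) : ℝ :=
  deriv (fun s => pdx h s y) x + deriv (fun s => pdy h x s) y

/-- The squared Euclidean gradient of a function of two variables. -/
noncomputable def gradSq (h : ℝ → ℝ → ℝ) (x y : ℝ) : ℝ :=
  (pdx h x y) ^ 2 + (pdy h x y) ^ 2

/-- Slice derivative in the first variable of a function of two real variables. -/
lemma hasDerivAt_slice_fst {H : ℝ × ℝ → ℝ} (hH : Differentiable ℝ H) (x y : ℝ) :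
    HasDerivAt (fun s => H (s, y)) (fderiv ℝ H (x, y) (1, 0)) x := by
  have h1 : HasDerivAt (fun s : ℝ => (s, y)) ((1 : ℝ), (0 : ℝ)) x :=
    (hasDerivAt_id x).prodMk (hasDerivAt_const x y)
  exact (hH (x, y)).hasFDerivAt.comp_hasDerivAt x h1

/-- Slice derivative in the second variable of a function of two real variables. -/
lemma hasDerivAt_slice_snd {H : ℝ × ℝ → ℝ} (hH : Differentiable ℝ H) (x y : ℝ) :
    HasDerivAt (fun t => H (x, t)) (fderiv ℝ H (x, y) (0, 1)) y := by
  have h1 : HasDerivAt (fun t : ℝ => (x, t)) ((0 : ℝ), (1 : ℝ)) y :=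
    (hasDerivAt_const y x).prodMk (hasDerivAt_id y)
  exact (hH (x, y)).hasFDerivAt.comp_hasDerivAt y h1

/-- Second derivative test: at a local minimum, the second derivative is nonnegative. -/
lemma second_deriv_test {f f' : ℝ → ℝ} {a : ℝ}
    (hf : ∀ x, HasDerivAt f (f' x) x)
    (hf' : DifferentiableAt ℝ f' a)
    (hmin : IsLocalMin f a) : 0 ≤ deriv f' a := by
  by_contra hneg
  push_neg at hneg
  have hfa0 : f' a = 0 := by
    have h0 := hmin.deriv_eq_zero
    rwa [(hf a).deriv] at h0
  have hL : HasDerivAt f' (deriv f' a) a := hf'.hasDerivAt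
  have hslope := hasDerivAt_iff_tendsto_slope.1 hL
  have hev0 : ∀ᶠ x in nhdsWithin a {a}ᶜ, slope f' a x < 0 :=
    hslope.eventually_lt_const hneg
  have hsub : nhdsWithin a (Set.Ioi a) ≤ nhdsWithin a {a}ᶜ :=
    nhdsWithin_mono a (fun x hx => ne_of_gt hx)
  have hev1 : ∀ᶠ x in nhdsWithin a (Set.Ioi a), slope f' a x < 0 := hev0.filter_mono hsub
  have hev2 : ∀ᶠ x in nhdsWithin a (Set.Ioi a), a < x :=
    eventually_mem_nhdsWithin
  have hev3 : ∀ᶠ x in nhdsWithin a (Set.Ioi a), f' x < 0 := by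
    filter_upwards [hev1, hev2] with x hx1 hx2
    have hxa : 0 < x - a := sub_pos.2 hx2
    have : slope f' a x = f' x / (x - a) := by
      rw [slope_def_field, hfa0, sub_zero]
    rw [this] at hx1
    rcases div_neg_iff.1 hx1 with h' | h'
    · linarith [h'.2]
    · exact h'.1
  have hev4 : ∀ᶠ x in nhdsWithin a (Set.Ioi a), f a ≤ f x :=
    hmin.filter_mono nhdsWithin_le_nhds
  obtain ⟨u, hu, husub⟩ := mem_nhdsGT_iff_exists_Ioo_subset.1 (hev3.and hev4)
  set b := (a + u) / 2 with hb
  have hab : a < b := by simp only [hb]; linarith [Set.mem_Ioi.1 hu]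
  have hbu : b < u := by simp only [hb]; linarith [Set.mem_Ioi.1 hu]
  have hanti : StrictAntiOn f (Set.Icc a b) := by
    apply strictAntiOn_of_deriv_neg (convex_Icc a b)
    · exact fun x _ => (hf x).continuousAt.continuousWithinAt
    · intro x hx
      rw [interior_Icc] at hx
      rw [(hf x).deriv]
      exact (husub ⟨hx.1, lt_trans hx.2 hbu⟩).1
  have h1 : f b < f a :=
    hanti (Set.left_mem_Icc.2 hab.le) (Set.right_mem_Icc.2 hab.le) hab
  have h2 : f a ≤ f b := (husub ⟨hab, hbu⟩).2
  linarith

/-- Minimum principle for `L u = Δu + |∇u|²` on the subannulus `Ω = [η₁, η₂] × S¹` of the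
torus: if `Δh + |∇h|² ≤ 1/(2j)` pointwise and `γ = √(C/(2j)) > 0` satisfies
`1/(2j) ≤ γ²(e^{2γθ} + e^{γθ})` on `[η₁, η₂]`, then
`min_Ω h ≥ min_{∂Ω} h - (e^{γη₂} - e^{γη₁})`. -/
theorem min_principle_annulus
    (j : ℝ) (hj : 0 < j)
    (h : ℝ → ℝ → ℝ) (hsm : ContDiff ℝ (⊤ : ℕ∞) (fun p : ℝ × ℝ => h p.1 p.2))
    (hperx : ∀ y, Function.Periodic (fun x => h x y) (2 * π))
    (hpery : ∀ x, Function.Periodic (fun y => h x y) (2 * π))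
    (hineq : ∀ x y, lap2 h x y + gradSq h x y ≤ 1 / (2 * j))
    (η₁ η₂ : ℝ) (hη : η₁ ≤ η₂) (hη₁ : -π ≤ η₁) (hη₂ : η₂ ≤ π)
    (γ : ℝ) (hγ : 0 < γ)
    (hγchoice : ∀ θ ∈ Set.Icc η₁ η₂, 1 / (2 * j) ≤ γ ^ 2 * (Real.exp (2 * γ * θ) + Real.exp (γ * θ))) :
    ∀ x ∈ Set.Icc η₁ η₂, ∀ y : ℝ,
      sInf {v : ℝ | ∃ y' : ℝ, v = h η₁ y' ∨ v = h η₂ y'}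
        - (Real.exp (γ * η₂) - Real.exp (γ * η₁)) ≤ h x y := by
  intro x hx y
  set H : ℝ × ℝ → ℝ := fun p => h p.1 p.2 with hH
  have hdiff : Differentiable ℝ H := hsm.differentiable (by simp)
  have hcont : Continuous H := hsm.continuous
  set S : Set ℝ := {v : ℝ | ∃ y' : ℝ, v = h η₁ y' ∨ v = h η₂ y'} with hS
  have h2π : (0 : ℝ) < 2 * π := by positivity
  -- S is nonempty and bounded below
  have hSne : S.Nonempty := ⟨h η₁ 0, 0, Or.inl rfl⟩
  have hKcomp : IsCompact ((Set.Icc η₁ η₂) ×ˢ (Set.Icc 0 (2 * π))) :=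
    isCompact_Icc.prod isCompact_Icc
  have hKne : ((Set.Icc η₁ η₂) ×ˢ (Set.Icc 0 (2 * π))).Nonempty :=
    ⟨(η₁, 0), ⟨Set.left_mem_Icc.2 hη, Set.left_mem_Icc.2 h2π.le⟩⟩
  obtain ⟨q₀, hq₀K, hq₀min⟩ := hKcomp.exists_isMinOn hKne hcont.continuousOn
  have hSbdd : BddBelow S := by
    refine ⟨H q₀, fun v hv => ?_⟩
    obtain ⟨y', hv⟩ := hv
    rcases hv with hv | hv
    · obtain ⟨y'', hy'', he⟩ := (hpery η₁).exists_mem_Ico₀ h2π y'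
      rw [hv]
      calc H q₀ ≤ H (η₁, y'') := isMinOn_iff.1 hq₀min (η₁, y'')
                  ⟨Set.left_mem_Icc.2 hη, Set.Ico_subset_Icc_self hy''⟩
        _ = h η₁ y' := he.symm
    · obtain ⟨y'', hy'', he⟩ := (hpery η₂).exists_mem_Ico₀ h2π y'
      rw [hv]
      calc H q₀ ≤ H (η₂, y'') := isMinOn_iff.1 hq₀min (η₂, y'')
                  ⟨Set.right_mem_Icc.2 hη, Set.Ico_subset_Icc_self hy''⟩
        _ = h η₂ y' := he.symm
  -- partial derivative functions
  set g1 : ℝ × ℝ → ℝ := fun p => fderiv ℝ H p (1, 0) with hg1def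
  set g2 : ℝ × ℝ → ℝ := fun p => fderiv ℝ H p (0, 1) with hg2def
  have hg1 : ContDiff ℝ (⊤ : ℕ∞) g1 := (hsm.fderiv_right (by simp)).clm_apply contDiff_const
  have hg2 : ContDiff ℝ (⊤ : ℕ∞) g2 := (hsm.fderiv_right (by simp)).clm_apply contDiff_const
  have hpdx : ∀ s t : ℝ, pdx h s t = g1 (s, t) := fun s t =>
    (hasDerivAt_slice_fst hdiff s t).deriv
  have hpdy : ∀ s t : ℝ, pdy h s t = g2 (s, t) := fun s t =>
    (hasDerivAt_slice_snd hdiff s t).deriv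
  have hlap : ∀ s t : ℝ,
      lap2 h s t = fderiv ℝ g1 (s, t) (1, 0) + fderiv ℝ g2 (s, t) (0, 1) := by
    intro s t
    have e1 : (fun u => pdx h u t) = fun u => g1 (u, t) := funext fun u => hpdx u t
    have e2 : (fun u => pdy h s u) = fun u => g2 (s, u) := funext fun u => hpdy s u
    rw [lap2, e1, e2, (hasDerivAt_slice_fst (hg1.differentiable (by simp)) s t).deriv,
      (hasDerivAt_slice_snd (hg2.differentiable (by simp)) s t).deriv]
  -- main claim, for c > 1
  have claim : ∀ c : ℝ, 1 < c →
      sInf S - c * (Real.exp (γ * η₂) - Real.exp (γ * η₁)) ≤ h x y := by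
    intro c hc
    have hc0 : (0 : ℝ) < c := lt_trans one_pos hc
    set F : ℝ → ℝ → ℝ := fun s t => h s t - c * Real.exp (γ * s) with hF
    have hGcont : Continuous (fun p : ℝ × ℝ => F p.1 p.2) := by
      exact hcont.sub (continuous_const.mul (Real.continuous_exp.comp (continuous_const.mul continuous_fst)))
    obtain ⟨p₀, hp₀K, hp₀min⟩ := hKcomp.exists_isMinOn hKne hGcont.continuousOn
    obtain ⟨x₀, y₀⟩ := p₀
    have hx₀Icc : x₀ ∈ Set.Icc η₁ η₂ := hp₀K.1
    have hmin_all : ∀ s ∈ Set.Icc η₁ η₂, ∀ t : ℝ, F x₀ y₀ ≤ F s t := by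
      intro s hs t
      obtain ⟨t', ht', hte⟩ := (hpery s).exists_mem_Ico₀ h2π t
      have : F s t = F s t' := by
        simp only [hF]
        rw [show h s t = h s t' from hte]
      rw [this]
      exact isMinOn_iff.1 hp₀min (s, t') ⟨hs, Set.Ico_subset_Icc_self ht'⟩
    -- exp derivative helper
    have hexp : ∀ u : ℝ, HasDerivAt (fun v => Real.exp (γ * v)) (Real.exp (γ * u) * γ) u := by
      intro u
      have h1 : HasDerivAt (fun v : ℝ => γ * v) γ u := by
        simpa using (hasDerivAt_id u).const_mul γ
      exact (Real.hasDerivAt_exp (γ * u)).comp u h1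
    -- x-slice derivatives of F
    have hfx : ∀ t : ℝ, ∀ u : ℝ, HasDerivAt (fun s => F s t)
        (g1 (u, t) - c * (Real.exp (γ * u) * γ)) u := by
      intro t u
      exact (hasDerivAt_slice_fst hdiff u t).sub (HasDerivAt.const_mul c (hexp u))
    -- boundary vs interior
    have hbdy : (x₀ = η₁ ∨ x₀ = η₂) →
        sInf S - c * (Real.exp (γ * η₂) - Real.exp (γ * η₁)) ≤ h x y := by
      intro hb
      have hFmin : F x₀ y₀ ≤ F x y := hmin_all x hx y
      have hSle : sInf S ≤ h x₀ y₀ := by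
        apply csInf_le hSbdd
        rcases hb with hb | hb
        · exact ⟨y₀, Or.inl (by rw [hb])⟩
        · exact ⟨y₀, Or.inr (by rw [hb])⟩
      have he1 : Real.exp (γ * x₀) ≤ Real.exp (γ * η₂) :=
        Real.exp_le_exp.2 (mul_le_mul_of_nonneg_left hx₀Icc.2 hγ.le)
      have he2 : Real.exp (γ * η₁) ≤ Real.exp (γ * x) :=
        Real.exp_le_exp.2 (mul_le_mul_of_nonneg_left hx.1 hγ.le)
      have hm1 : c * Real.exp (γ * x₀) ≤ c * Real.exp (γ * η₂) :=
        mul_le_mul_of_nonneg_left he1 hc0.le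
      have hm2 : c * Real.exp (γ * η₁) ≤ c * Real.exp (γ * x) :=
        mul_le_mul_of_nonneg_left he2 hc0.le
      have hFx : F x y = h x y - c * Real.exp (γ * x) := rfl
      have hFx₀ : F x₀ y₀ = h x₀ y₀ - c * Real.exp (γ * x₀) := rfl
      rw [hFx, hFx₀] at hFmin
      linarith
    rcases eq_or_lt_of_le hx₀Icc.1 with hb1 | h1lt
    · exact hbdy (Or.inl hb1.symm)
    rcases eq_or_lt_of_le hx₀Icc.2 with hb2 | h2lt
    · exact hbdy (Or.inr hb2)
    -- interior case: contradiction
    exfalso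
    set E := Real.exp (γ * x₀) with hE
    have hEpos : 0 < E := Real.exp_pos _
    -- local min in x-direction
    have hminx : IsLocalMin (fun s => F s y₀) x₀ := by
      have hIcc : Set.Icc η₁ η₂ ∈ nhds x₀ := Icc_mem_nhds h1lt h2lt
      filter_upwards [hIcc] with s hs
      exact hmin_all s hs y₀
    -- local min in y-direction (global)
    have hminy : IsLocalMin (fun t => F x₀ t) y₀ :=
      Filter.Eventually.of_forall fun t => hmin_all x₀ hx₀Icc t
    -- first-order conditions
    have hdx0 : g1 (x₀, y₀) - c * (E * γ) = 0 := by
      have := hminx.deriv_eq_zero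
      rwa [(hfx y₀ x₀).deriv] at this
    have hfy : ∀ u : ℝ, HasDerivAt (fun t => F x₀ t) (g2 (x₀, u)) u := by
      intro u
      exact (hasDerivAt_slice_snd hdiff x₀ u).sub_const _
    have hdy0 : g2 (x₀, y₀) = 0 := by
      have := hminy.deriv_eq_zero
      rwa [(hfy y₀).deriv] at this
    -- second-order conditions
    have hsec_x : 0 ≤ fderiv ℝ g1 (x₀, y₀) (1, 0) - c * (E * γ * γ) := by
      have hD2 : HasDerivAt (fun u => g1 (u, y₀) - c * (Real.exp (γ * u) * γ))
          (fderiv ℝ g1 (x₀, y₀) (1, 0) - c * (E * γ * γ)) x₀ := by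
        have h1 := hasDerivAt_slice_fst (hg1.differentiable (by simp)) x₀ y₀
        have h2 : HasDerivAt (fun u => Real.exp (γ * u) * γ) (E * γ * γ) x₀ :=
          (hexp x₀).mul_const γ
        exact h1.sub (HasDerivAt.const_mul c h2)
      have := second_deriv_test (hfx y₀) hD2.differentiableAt hminx
      rwa [hD2.deriv] at this
    have hsec_y : 0 ≤ fderiv ℝ g2 (x₀, y₀) (0, 1) := by
      have hD2 : HasDerivAt (fun u => g2 (x₀, u)) (fderiv ℝ g2 (x₀, y₀) (0, 1)) y₀ :=
        hasDerivAt_slice_snd (hg2.differentiable (by simp)) x₀ y₀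
      have := second_deriv_test hfy hD2.differentiableAt hminy
      rwa [hD2.deriv] at this
    -- assemble inequalities
    have hglap := hineq x₀ y₀
    have hgrad : gradSq h x₀ y₀ = (c * (E * γ)) ^ 2 := by
      rw [gradSq, hpdx, hpdy, hdy0, show g1 (x₀, y₀) = c * (E * γ) by linarith]
      ring
    rw [hlap x₀ y₀, hgrad] at hglap
    have hchoice := hγchoice x₀ hx₀Icc
    have hE2 : Real.exp (2 * γ * x₀) = E ^ 2 := by
      rw [show (2 * γ * x₀) = γ * x₀ + γ * x₀ by ring, Real.exp_add, hE]; ring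
    rw [hE2] at hchoice
    nlinarith [mul_pos hEpos hEpos, mul_pos hγ hγ, sq_nonneg (E * γ),
      mul_pos (mul_pos hEpos hEpos) (mul_pos hγ hγ),
      mul_pos (mul_pos (mul_pos hEpos hEpos) (mul_pos hγ hγ)) (sub_pos.2 hc),
      mul_pos (mul_pos hEpos (mul_pos hγ hγ)) (sub_pos.2 hc)]
  -- pass to the limit c → 1⁺
  set D := Real.exp (γ * η₂) - Real.exp (γ * η₁) with hD
  have hD0 : 0 ≤ D := by
    have : Real.exp (γ * η₁) ≤ Real.exp (γ * η₂) :=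
      Real.exp_le_exp.2 (mul_le_mul_of_nonneg_left hη hγ.le)
    exact sub_nonneg.2 this
  have key : ∀ ε : ℝ, 0 < ε → sInf S - D ≤ h x y + ε := by
    intro ε hε
    have hD1 : (0 : ℝ) < D + 1 := by linarith
    set c := 1 + ε / (D + 1) with hc
    have hc1 : 1 < c := by
      have : 0 < ε / (D + 1) := div_pos hε hD1
      simp [hc]; linarith
    have hcl := claim c hc1
    have hcd : (c - 1) * D ≤ ε := by
      have h1 : c - 1 = ε / (D + 1) := by simp [hc]
      rw [h1, div_mul_eq_mul_div, div_le_iff₀ hD1]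
      nlinarith
    linarith
  exact le_of_forall_pos_le_add key
end
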